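/- Let A ∈ ℝ^{n×n} with A_sym := (A+Aᵀ)/2 positive definite, let ε > 0, and let U : ℝ → ℝ^{n×r} be differentiable on [0,∞), satisfy the Oja flow ε·(d/dt)U(t) = (I_n − U(t)U(t)ᵀ)·A·U(t) for all t ≥ 0, and have U(0) of full column rank r. Let μ := min(1, λ_min(U(0)ᵀU(0))), where λ_min denotes the smallest eigenvalue of a symmetric matrix. Then for every t ≥ 0 the matrix U(t)ᵀU(t) − μ·I_r is positive semidefinite (equivalently, the smallest singular value of U(t) is at least min(1, σ_r(0)) where σ_r(0) is the smallest singular value of U(0)). -/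

import Mathlib

/-!
Write `W = UᵀU - μ I` and `Q = UᵀAU`. Along the Oja flow
`ε Ẇ = (1 - μ) (Q + Qᵀ) - W Q - Qᵀ W`, so for any solution of the linear ODE `ε ẏ = Q y` the
quadratic form `yᵀ W y` has derivative `ε⁻¹ (1 - μ) yᵀ (Q + Qᵀ) y ≥ 0`, since `μ ≤ 1` and
`Q + Qᵀ = Uᵀ (A + Aᵀ) U` is positive semidefinite. Solving that ODE backwards from `y(t) = x`
gives `xᵀ W(t) x ≥ y(0)ᵀ W(0) y(0) ≥ 0`, the last step because `μ` is at most the smallest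
eigenvalue of `U(0)ᵀU(0)`.
-/

open Matrix Set
open scoped NNReal

section LinearODE

variable {E : Type*} [NormedAddCommGroup E] [NormedSpace ℝ E]

theorem forall_mem_Icc_hasDerivWithinAt_piecewise {v : ℝ → E → E} {f g : ℝ → E} {a b c : ℝ}
    (hab : a ≤ b) (hbc : b ≤ c) (hfg : f b = g b)
    (hf : ∀ t ∈ Icc a b, HasDerivWithinAt f (v t (f t)) (Icc a b) t)
    (hg : ∀ t ∈ Icc b c, HasDerivWithinAt g (v t (g t)) (Icc b c) t) :
    ∀ t ∈ Icc a c, HasDerivWithinAt (fun τ => if τ ≤ b then f τ else g τ)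
      (v t (if t ≤ b then f t else g t)) (Icc a c) t := by
  set F : ℝ → E := fun τ => if τ ≤ b then f τ else g τ
  intro t _
  have piece {s : Set ℝ} {φ : ℝ → E} (hs : IsClosed s) (hFφ : EqOn F φ s)
      (hφ : ∀ t ∈ s, HasDerivWithinAt φ (v t (φ t)) s t) : HasDerivWithinAt F (v t (F t)) s t := by
    by_cases hts : t ∈ s
    · rw [hFφ hts]
      exact (hφ t hts).congr_of_mem hFφ hts
    · exact HasFDerivWithinAt.of_notMem_closure (by rwa [hs.closure_eq])
  rw [← Icc_union_Icc_eq_Icc hab hbc]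
  refine (piece isClosed_Icc (fun τ hτ => if_pos hτ.2) hf).union
    (piece isClosed_Icc (fun τ hτ => ?_) hg)
  rcases hτ.1.eq_or_lt with rfl | hbτ
  · simp [F, hfg]
  · exact if_neg hbτ.not_ge

variable [CompleteSpace E]

theorem exists_eq_right_forall_mem_Icc_hasDerivWithinAt_of_norm_le {A : ℝ → E →L[ℝ] E}
    {a b : ℝ} {L : ℝ≥0} (hab : a ≤ b) (hA : ContinuousOn A (Icc a b))
    (hAL : ∀ t ∈ Icc a b, ‖A t‖₊ ≤ L) (hlen : 2 * L * (b - a) ≤ 1) (x₀ : E) :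
    ∃ f : ℝ → E, f b = x₀ ∧ ∀ t ∈ Icc a b, HasDerivWithinAt f (A t (f t)) (Icc a b) t := by
  have hPL : IsPicardLindelof (fun t x => A t x) (⟨b, hab, le_rfl⟩ : Icc a b) x₀ ‖x₀‖₊ 0
      (2 * L * ‖x₀‖₊) L := by
    refine ⟨fun t ht => ((A t).lipschitz.weaken (hAL t ht)).lipschitzOnWith,
      fun x _ => hA.clm_apply continuousOn_const, fun t ht x hx => ?_, ?_⟩
    · have hx' : ‖x‖ ≤ 2 * ‖x₀‖ := by
        rw [mem_closedBall_iff_norm, coe_nnnorm] at hx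
        linarith [norm_le_norm_add_norm_sub' x x₀]
      calc ‖A t x‖ ≤ ‖A t‖ * ‖x‖ := (A t).le_opNorm x
        _ ≤ L * (2 * ‖x₀‖) := by gcongr; exact_mod_cast hAL t ht
        _ = _ := by push_cast; ring
    · simp only [sub_self, NNReal.coe_zero, sub_zero, coe_nnnorm]
      rw [max_eq_right (by linarith)]
      push_cast
      nlinarith [norm_nonneg x₀]
  exact hPL.exists_eq_forall_mem_Icc_hasDerivWithinAt₀

theorem exists_eq_right_forall_mem_Icc_hasDerivWithinAt_of_continuousOn {A : ℝ → E →L[ℝ] E}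
    {a b : ℝ} (hab : a ≤ b) (hA : ContinuousOn A (Icc a b)) (x₀ : E) :
    ∃ f : ℝ → E, f b = x₀ ∧ ∀ t ∈ Icc a b, HasDerivWithinAt f (A t (f t)) (Icc a b) t := by
  obtain ⟨K, hK⟩ := isCompact_Icc.exists_bound_of_continuousOn hA
  set L : ℝ≥0 := K.toNNReal
  have hAL : ∀ t ∈ Icc a b, ‖A t‖₊ ≤ L := fun t ht => by
    rw [← NNReal.coe_le_coe, coe_nnnorm]
    exact (hK t ht).trans (Real.le_coe_toNNReal K)
  set h : ℝ := (2 * L + 1)⁻¹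
  have hh : 0 < h := by positivity
  have h2Lh : 2 * L * h ≤ 1 := by
    rw [← div_eq_mul_inv, div_le_one (by positivity)]
    linarith
  -- on intervals of length `h` Picard–Lindelöf applies; glue such pieces leftwards from `b`
  have key : ∀ N : ℕ, ∃ f : ℝ → E, f b = x₀ ∧ ∀ t ∈ Icc (max a (b - N * h)) b,
      HasDerivWithinAt f (A t (f t)) (Icc (max a (b - N * h)) b) t := by
    intro N
    induction N with
    | zero =>
      simp only [CharP.cast_eq_zero, zero_mul, sub_zero, max_eq_right hab]
      exact exists_eq_right_forall_mem_Icc_hasDerivWithinAt_of_norm_le le_rfl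
        (hA.mono (Icc_subset_Icc hab le_rfl)) (fun t ht => hAL t ⟨hab.trans ht.1, ht.2⟩)
        (by simp) x₀
    | succ N ih =>
      obtain ⟨f, hfb, hf⟩ := ih
      set c := max a (b - N * h)
      set c' := max a (b - (N + 1 : ℕ) * h)
      have hac' : a ≤ c' := le_max_left _ _
      have hc'c : c' ≤ c := max_le_max le_rfl (by push_cast; linarith)
      have hcb : c ≤ b := max_le hab (by linarith [mul_nonneg N.cast_nonneg hh.le])
      have hcc' : c - c' ≤ h := by
        have : b - (N + 1 : ℕ) * h ≤ c' := le_max_right _ _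
        push_cast at this
        linarith [max_le (by linarith : a ≤ c' + h) (by linarith : b - N * h ≤ c' + h)]
      obtain ⟨g, hgc, hg⟩ := exists_eq_right_forall_mem_Icc_hasDerivWithinAt_of_norm_le hc'c
        (hA.mono (Icc_subset_Icc hac' hcb))
        (fun t ht => hAL t ⟨hac'.trans ht.1, ht.2.trans hcb⟩)
        (by nlinarith [NNReal.coe_nonneg L]) (f c)
      refine ⟨_, ?_, forall_mem_Icc_hasDerivWithinAt_piecewise hc'c hcb hgc hg hf⟩
      split_ifs with hbc
      · rw [← hfb, ← le_antisymm hcb hbc, hgc]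
      · exact hfb
  obtain ⟨N, hN⟩ := exists_nat_ge ((b - a) / h)
  obtain ⟨f, hfb, hf⟩ := key N
  rw [max_eq_left (by rw [div_le_iff₀ hh] at hN; linarith)] at hf
  exact ⟨f, hfb, hf⟩

end LinearODE

section MatrixCalculus

variable {l m n : Type*} {s : Set ℝ} {t : ℝ}

def HasMatrixDerivWithinAt (M : ℝ → Matrix m n ℝ) (M' : Matrix m n ℝ) (s : Set ℝ) (t : ℝ) :
    Prop :=
  ∀ i j, HasDerivWithinAt (fun τ => M τ i j) (M' i j) s t

namespace HasMatrixDerivWithinAt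

variable {M N : ℝ → Matrix m n ℝ} {M' : Matrix m n ℝ}

theorem mono {s' : Set ℝ} (hM : HasMatrixDerivWithinAt M M' s t) (hs : s' ⊆ s) :
    HasMatrixDerivWithinAt M M' s' t :=
  fun i j => (hM i j).mono hs

theorem transpose (hM : HasMatrixDerivWithinAt M M' s t) :
    HasMatrixDerivWithinAt (fun τ => (M τ)ᵀ) M'ᵀ s t :=
  fun i j => hM j i

theorem sub_const (hM : HasMatrixDerivWithinAt M M' s t) (C : Matrix m n ℝ) :
    HasMatrixDerivWithinAt (fun τ => M τ - C) M' s t :=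
  fun i j => (hM i j).sub_const (C i j)

theorem mul [Fintype n] {N : ℝ → Matrix n l ℝ} {N' : Matrix n l ℝ}
    (hM : HasMatrixDerivWithinAt M M' s t) (hN : HasMatrixDerivWithinAt N N' s t) :
    HasMatrixDerivWithinAt (fun τ => M τ * N τ) (M' * N t + M t * N') s t := by
  intro i j
  have h := HasDerivWithinAt.fun_sum (u := Finset.univ) fun k _ => (hM i k).mul (hN k j)
  simp only [Pi.mul_apply, Finset.sum_add_distrib] at h
  simpa only [mul_apply, Matrix.add_apply] using h

theorem dotProduct_mulVec [Fintype n] {W : ℝ → Matrix n n ℝ} {W' : Matrix n n ℝ}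
    {y : ℝ → n → ℝ} {y' : n → ℝ}
    (hW : HasMatrixDerivWithinAt W W' s t) (hy : HasDerivWithinAt y y' s t) :
    HasDerivWithinAt (fun τ => y τ ⬝ᵥ (W τ *ᵥ y τ))
      (y' ⬝ᵥ (W t *ᵥ y t) + y t ⬝ᵥ (W' *ᵥ y t) + y t ⬝ᵥ (W t *ᵥ y')) s t := by
  have hyi := hasDerivWithinAt_pi.mp hy
  simp only [dotProduct, mulVec, Finset.mul_sum, ← Finset.sum_add_distrib, ← mul_assoc]
  exact HasDerivWithinAt.fun_sum fun i _ => HasDerivWithinAt.fun_sum fun j _ =>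
    (((hyi i).mul (hW i j)).mul (hyi j)).congr_deriv (by simp only [Pi.mul_apply]; ring)

end HasMatrixDerivWithinAt

end MatrixCalculus

theorem posSemidef_of_lyapunov_posSemidef {n : Type*} [Fintype n] [DecidableEq n]
    {W W' B : ℝ → Matrix n n ℝ} {a b : ℝ} (hab : a ≤ b) (hB : ContinuousOn B (Icc a b))
    (hW : ∀ t ∈ Icc a b, HasMatrixDerivWithinAt W (W' t) (Icc a b) t)
    (hlyap : ∀ t ∈ Icc a b, ((B t)ᵀ * W t + W' t + W t * B t).PosSemidef)
    (ha : (W a).PosSemidef) (hb : (W b).IsHermitian) : (W b).PosSemidef := by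
  refine .of_dotProduct_mulVec_nonneg hb fun x => ?_
  rw [star_trivial]
  let toCLM : Matrix n n ℝ →ₗ[ℝ] (n → ℝ) →L[ℝ] (n → ℝ) :=
    LinearMap.toContinuousLinearMap.toLinearMap ∘ₗ Matrix.toLin'.toLinearMap
  obtain ⟨y, hyb, hy⟩ := exists_eq_right_forall_mem_Icc_hasDerivWithinAt_of_continuousOn hab
    (toCLM.continuous_of_finiteDimensional.comp_continuousOn hB) x
  set F : ℝ → ℝ := fun τ => y τ ⬝ᵥ (W τ *ᵥ y τ)
  have hF : ∀ t ∈ Icc a b, HasDerivWithinAt F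
      (y t ⬝ᵥ (((B t)ᵀ * W t + W' t + W t * B t) *ᵥ y t)) (Icc a b) t := by
    intro t ht
    convert (hW t ht).dotProduct_mulVec (hy t ht) using 1
    simp only [toCLM, LinearMap.coe_comp, Function.comp_apply, LinearEquiv.coe_coe,
      LinearMap.coe_toContinuousLinearMap', Matrix.toLin'_apply, add_mulVec, dotProduct_add,
      ← mulVec_mulVec, dotProduct_mulVec _ (B t)ᵀ, vecMul_transpose]
  have hmono : MonotoneOn F (Icc a b) :=
    monotoneOn_of_hasDerivWithinAt_nonneg (convex_Icc a b)
      (fun t ht => (hF t ht).continuousWithinAt)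
      (fun t ht => (hF t (interior_subset ht)).mono interior_subset)
      (fun t ht => by simpa using (hlyap t (interior_subset ht)).dotProduct_mulVec_nonneg (y t))
  calc 0 ≤ F a := by simpa using ha.dotProduct_mulVec_nonneg (y a)
    _ ≤ F b := hmono ⟨le_rfl, hab⟩ ⟨hab, le_rfl⟩ hab
    _ = x ⬝ᵥ (W b *ᵥ x) := by simp only [F, hyb]

open scoped MatrixOrder in
theorem Matrix.IsHermitian.posSemidef_sub_smul_one {n : Type*} [Fintype n] [DecidableEq n]
    {B : Matrix n n ℝ} (hB : B.IsHermitian) {μ : ℝ} (hμ : ∀ i, μ ≤ hB.eigenvalues i) :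
    (B - μ • 1).PosSemidef := by
  rw [← Matrix.le_iff, ← Algebra.algebraMap_eq_smul_one,
    algebraMap_le_iff_le_spectrum hB.isSelfAdjoint, hB.spectrum_real_eq_range_eigenvalues]
  rintro _ ⟨i, rfl⟩
  exact hμ i

theorem oja_lyapunov_eq {m n : Type*} [Fintype m] [Fintype n] [DecidableEq m] [DecidableEq n]
    (A : Matrix m m ℝ) (U : Matrix m n ℝ) (c μ : ℝ) :
    (c • (Uᵀ * A * U))ᵀ * (Uᵀ * U - μ • 1)
      + ((c • ((1 - U * Uᵀ) * A * U))ᵀ * U + Uᵀ * (c • ((1 - U * Uᵀ) * A * U)))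
      + (Uᵀ * U - μ • 1) * (c • (Uᵀ * A * U))
      = ((1 - μ) * c) • (Uᵀ * (A + Aᵀ) * U) := by
  simp only [transpose_smul, transpose_mul, transpose_sub,
    transpose_transpose, Matrix.smul_mul, Matrix.mul_smul, Matrix.sub_mul, Matrix.mul_sub,
    Matrix.add_mul, Matrix.mul_add, Matrix.one_mul, Matrix.mul_one, Matrix.mul_assoc]
  module

theorem oja_flow_smallest_singular_value_bound
    (n r : ℕ)
    (A : Matrix (Fin n) (Fin n) ℝ)
    (hA : (((2:ℝ)⁻¹) • (A + Aᵀ)).PosDef)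
    (ε : ℝ) (hε : 0 < ε)
    (U U' : ℝ → Matrix (Fin n) (Fin r) ℝ)
    (hderiv : ∀ t ∈ Set.Ici (0:ℝ), ∀ i j,
      HasDerivWithinAt (fun s => U s i j) (U' t i j) (Set.Ici (0:ℝ)) t)
    (hode : ∀ t ∈ Set.Ici (0:ℝ),
      ε • U' t = (1 - U t * (U t)ᵀ) * A * U t)
    (μ : ℝ)
    (hμ : μ = min 1 (⨅ i,
      ((Matrix.conjTranspose_eq_transpose_of_trivial (U 0)) ▸
        Matrix.isHermitian_conjTranspose_mul_self (U 0)).eigenvalues i)) :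
    ∀ t ∈ Set.Ici (0:ℝ),
      ((U t)ᵀ * U t - μ • (1 : Matrix (Fin r) (Fin r) ℝ)).PosSemidef := by
  intro t₁ ht₁
  have hAA : (A + Aᵀ).PosSemidef := by
    simpa [smul_smul] using hA.posSemidef.smul (show (0:ℝ) ≤ 2 by norm_num)
  have hU' : ∀ t ∈ Ici (0:ℝ), U' t = ε⁻¹ • ((1 - U t * (U t)ᵀ) * A * U t) := fun t ht => by
    rw [← hode t ht, inv_smul_smul₀ hε.ne']
  have hUc : ContinuousOn U (Icc 0 t₁) := continuousOn_pi.2 fun i => continuousOn_pi.2 fun j =>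
    fun t ht => ((hderiv t ht.1 i j).continuousWithinAt).mono Icc_subset_Ici_self
  have hB : ContinuousOn (fun t => ε⁻¹ • ((U t)ᵀ * A * U t)) (Icc 0 t₁) := by
    rw [continuousOn_iff_continuous_domRestrict] at hUc ⊢
    exact ((hUc.matrix_transpose.matrix_mul continuous_const).matrix_mul hUc).const_smul ε⁻¹
  have hUU (t : ℝ) : ((U t)ᵀ * U t).IsHermitian :=
    conjTranspose_eq_transpose_of_trivial (U t) ▸ isHermitian_conjTranspose_mul_self (U t)
  have hUd : ∀ t ∈ Ici (0:ℝ), HasMatrixDerivWithinAt U (U' t) (Ici 0) t := hderiv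
  refine posSemidef_of_lyapunov_posSemidef (W := fun t => (U t)ᵀ * U t - μ • 1)
    (W' := fun t => (U' t)ᵀ * U t + (U t)ᵀ * U' t) ht₁ hB
    (fun t ht => (((hUd t ht.1).transpose.mul (hUd t ht.1)).sub_const _).mono
      Icc_subset_Ici_self) (fun t ht => ?_) ?_ ?_
  · rw [hU' t ht.1, oja_lyapunov_eq]
    have hμ1 : μ ≤ 1 := hμ ▸ min_le_left _ _
    exact (hAA.conjTranspose_mul_mul_same (U t)).smul
      (mul_nonneg (sub_nonneg.2 hμ1) (inv_nonneg.2 hε.le))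
  · refine (hUU 0).posSemidef_sub_smul_one fun i => ?_
    rw [hμ]
    exact (min_le_right _ _).trans (ciInf_le (finite_range _).bddBelow i)
  · exact (hUU t₁).sub (isHermitian_one.smul (.all μ))
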